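/- Through each point of the conic C there pass exactly: one line of L₁, q lines of L₃, one line of L₁', q(q−1) lines of L₄', and no line of L₂, L₄, L₂' or L₃'. -/

import Mathlib

/-!
Common setting: `PG(3,q)` as the lattice of subspaces of `V = GF(q)⁴`;
the pencil of quadrics `Q_λ : x₁x₃ - x₂² + λx₄² = 0`, the plane `π : x₄ = 0`,
the conic `C = Q_λ ∩ π`, and the group `G ≤ PGL(4,q)` induced by the matrices
`M(a,b,c,d)`.
-/

/-- The quadratic form `F_λ(x) = x₁x₃ - x₂² + λx₄²` on `V = F⁴`. -/
def Fq (F : Type) [Field F] (lam : F) (v : Fin 4 → F) : F :=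
  v 0 * v 2 - v 1 ^ 2 + lam * v 3 ^ 2

/-- The matrix `M(a,b,c,d)`. -/
def Mmat (F : Type) [Field F] (a b c d : F) : Matrix (Fin 4) (Fin 4) F :=
  !![a^2, 2*a*c, c^2, 0;
     a*b, a*d + b*c, c*d, 0;
     b^2, 2*b*d, d^2, 0;
     0,   0,       0,   a*d - b*c]

/-- A point of `PG(3,q)`: a 1-dimensional subspace of `F⁴`. -/
def isPoint (F : Type) [Field F] (P : Submodule F (Fin 4 → F)) : Prop :=
  Module.finrank F P = 1

/-- A line of `PG(3,q)`: a 2-dimensional subspace of `F⁴`. -/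
def isLine (F : Type) [Field F] (l : Submodule F (Fin 4 → F)) : Prop :=
  Module.finrank F l = 2

/-- A plane of `PG(3,q)`: a 3-dimensional subspace of `F⁴`. -/
def isPlane (F : Type) [Field F] (s : Submodule F (Fin 4 → F)) : Prop :=
  Module.finrank F s = 3

/-- The quadric `Q_λ`, as the set of points on which `F_λ` vanishes. -/
def quadric (F : Type) [Field F] (lam : F) : Set (Submodule F (Fin 4 → F)) :=
  {P | isPoint F P ∧ ∀ v ∈ P, Fq F lam v = 0}

/-- The plane `π : x₄ = 0`. -/
def planePi (F : Type) [Field F] : Submodule F (Fin 4 → F) where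
  carrier := {v | v 3 = 0}
  add_mem' := by
    intro a b ha hb
    simp only [Set.mem_setOf_eq, Pi.add_apply] at *
    rw [ha, hb, add_zero]
  zero_mem' := by simp
  smul_mem' := by
    intro c a ha
    simp only [Set.mem_setOf_eq, Pi.smul_apply, smul_eq_mul] at *
    rw [ha, mul_zero]

/-- The point `U₄ = ⟨(0,0,0,1)⟩`. -/
def pointU4 (F : Type) [Field F] : Submodule F (Fin 4 → F) :=
  Submodule.span F {(Pi.single 3 1 : Fin 4 → F)}

/-- The conic `C = Q_λ ∩ π` (independent of `λ`). -/
def conicC (F : Type) [Field F] : Set (Submodule F (Fin 4 → F)) :=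
  {P | P ∈ quadric F 0 ∧ P ≤ planePi F}

/-- The set of points of the quadric `Q_λ` lying on a subspace `l`. -/
def qpts (F : Type) [Field F] (lam : F) (l : Submodule F (Fin 4 → F)) :
    Set (Submodule F (Fin 4 → F)) :=
  {P | P ∈ quadric F lam ∧ P ≤ l}

/-- A line is tangent to `Q_λ` if it contains exactly one of its points. -/
def tangentTo (F : Type) [Field F] (l : Submodule F (Fin 4 → F)) (lam : F) : Prop :=
  (qpts F lam l).ncard = 1

/-- A line is secant to `Q_λ` if it contains exactly two of its points. -/
def secantTo (F : Type) [Field F] (l : Submodule F (Fin 4 → F)) (lam : F) : Prop :=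
  (qpts F lam l).ncard = 2

/-- A line is external to `Q_λ` if it contains none of its points. -/
def externalTo (F : Type) [Field F] (l : Submodule F (Fin 4 → F)) (lam : F) : Prop :=
  (qpts F lam l).ncard = 0

/-- `L₁`: lines of `π` tangent to `C`. -/
def lineL1 (F : Type) [Field F] : Set (Submodule F (Fin 4 → F)) :=
  {l | isLine F l ∧ l ≤ planePi F ∧ ({P | P ∈ conicC F ∧ P ≤ l}).ncard = 1}

/-- `L₂`: lines of `π` external to `C`. -/
def lineL2 (F : Type) [Field F] : Set (Submodule F (Fin 4 → F)) :=
  {l | isLine F l ∧ l ≤ planePi F ∧ ({P | P ∈ conicC F ∧ P ≤ l}).ncard = 0}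

/-- `L₃`: lines of `π` secant to `C`. -/
def lineL3 (F : Type) [Field F] : Set (Submodule F (Fin 4 → F)) :=
  {l | isLine F l ∧ l ≤ planePi F ∧ ({P | P ∈ conicC F ∧ P ≤ l}).ncard = 2}

/-- `E`: the external points of `C` in `π` (on exactly two tangent lines of `C`). -/
def setE (F : Type) [Field F] : Set (Submodule F (Fin 4 → F)) :=
  {P | isPoint F P ∧ P ≤ planePi F ∧ P ∉ conicC F ∧
    ({m | m ∈ lineL1 F ∧ P ≤ m}).ncard = 2}

/-- `I`: the internal points of `C` in `π` (on no tangent line of `C`). -/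
def setI (F : Type) [Field F] : Set (Submodule F (Fin 4 → F)) :=
  {P | isPoint F P ∧ P ≤ planePi F ∧ P ∉ conicC F ∧
    ({m | m ∈ lineL1 F ∧ P ≤ m}).ncard = 0}

/-- `L₁'`: the lines through `U₄` contained in the cone `Q₀`. -/
def lineL1' (F : Type) [Field F] : Set (Submodule F (Fin 4 → F)) :=
  {l | isLine F l ∧ pointU4 F ≤ l ∧ ∀ v ∈ l, Fq F 0 v = 0}

/-- `L₂'`: the lines through `U₄` meeting `π` in a point of `I`. -/
def lineL2' (F : Type) [Field F] : Set (Submodule F (Fin 4 → F)) :=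
  {l | isLine F l ∧ pointU4 F ≤ l ∧ (l ⊓ planePi F) ∈ setI F}

/-- `L₃'`: the lines through `U₄` meeting `π` in a point of `E`. -/
def lineL3' (F : Type) [Field F] : Set (Submodule F (Fin 4 → F)) :=
  {l | isLine F l ∧ pointU4 F ≤ l ∧ (l ⊓ planePi F) ∈ setE F}

/-- `L₄`: the lines not through `U₄`, tangent to the cone `Q₀`, meeting `π` in a
point of `E`. -/
def lineL4 (F : Type) [Field F] : Set (Submodule F (Fin 4 → F)) :=
  {l | isLine F l ∧ ¬ pointU4 F ≤ l ∧ tangentTo F l 0 ∧ (l ⊓ planePi F) ∈ setE F}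

/-- `L₄'`: the lines meeting `π` in exactly one point, lying on `C`, and secant to
every quadric `Q_λ`. -/
def lineL4' (F : Type) [Field F] : Set (Submodule F (Fin 4 → F)) :=
  {l | isLine F l ∧ (l ⊓ planePi F) ∈ conicC F ∧ ∀ lam : F, secantTo F l lam}

/-- The collineations of `PG(3,q)` induced by the matrices `M(a,b,c,d)`,
`ad - bc ≠ 0`, acting on subspaces. -/
def Gcoll (F : Type) [Field F] : Set (Equiv.Perm (Submodule F (Fin 4 → F))) :=
  {σ | ∃ a b c d : F, a * d - b * c ≠ 0 ∧
    ∃ e : (Fin 4 → F) ≃ₗ[F] (Fin 4 → F),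
      (∀ v, e v = (Mmat F a b c d).mulVec v) ∧
      ∀ W : Submodule F (Fin 4 → F), σ W = W.map e.toLinearMap}

/-- The group `G ≃ PGL(2,q)`, as a group of collineations of `PG(3,q)`. -/
def G (F : Type) [Field F] : Subgroup (Equiv.Perm (Submodule F (Fin 4 → F))) :=
  Subgroup.closure (Gcoll F)

/-- `A = L₁' ∪ L₂' ∪ L₃ ∪ L₄'`. -/
def setA (F : Type) [Field F] : Set (Submodule F (Fin 4 → F)) :=
  lineL1' F ∪ lineL2' F ∪ lineL3 F ∪ lineL4' F

/-- `B = L₁ ∪ L₂ ∪ L₃' ∪ L₄`. -/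
def setB (F : Type) [Field F] : Set (Submodule F (Fin 4 → F)) :=
  lineL1 F ∪ lineL2 F ∪ lineL3' F ∪ lineL4 F

/-- `S_ℓ`: the lines of `S` meeting the line `ℓ` (in at least a point). -/
def linesMeeting (F : Type) [Field F] (S : Set (Submodule F (Fin 4 → F)))
    (l : Submodule F (Fin 4 → F)) : Set (Submodule F (Fin 4 → F)) :=
  {r | r ∈ S ∧ r ⊓ l ≠ ⊥}

/-- A spread of `PG(3,q)`: `q² + 1` pairwise disjoint lines. -/
def isSpread (F : Type) [Field F] (q : ℕ) (S : Set (Submodule F (Fin 4 → F))) : Prop :=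
  (∀ l ∈ S, isLine F l) ∧ S.ncard = q ^ 2 + 1 ∧
    ∀ l ∈ S, ∀ l' ∈ S, l ≠ l' → l ⊓ l' = ⊥

/-- A Cameron–Liebler line class with parameter `x`: a set of lines meeting every
spread in exactly `x` lines. -/
def isCameronLiebler (F : Type) [Field F] (q x : ℕ)
    (L : Set (Submodule F (Fin 4 → F))) : Prop :=
  (∀ l ∈ L, isLine F l) ∧ ∀ S, isSpread F q S → (L ∩ S).ncard = x

/-- `O_n`: the points off `Q_λ` at which `F_λ` evaluates to a nonsquare. -/
def setOn (F : Type) [Field F] (lam : F) : Set (Submodule F (Fin 4 → F)) :=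
  {P | isPoint F P ∧ ∀ v ∈ P, v ≠ 0 → ¬ IsSquare (Fq F lam v)}

/-- `O_s`: the points off `Q_λ` at which `F_λ` evaluates to a nonzero square. -/
def setOs (F : Type) [Field F] (lam : F) : Set (Submodule F (Fin 4 → F)) :=
  {P | isPoint F P ∧ ∀ v ∈ P, v ≠ 0 → Fq F lam v ≠ 0 ∧ IsSquare (Fq F lam v)}

/-- `T`: the tangent lines to `Q_λ` all of whose points off `Q_λ` lie in `O_n`. -/
def setT (F : Type) [Field F] (lam : F) : Set (Submodule F (Fin 4 → F)) :=
  {l | isLine F l ∧ tangentTo F l lam ∧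
    ∀ P, isPoint F P → P ≤ l → P ∉ quadric F lam → P ∈ setOn F lam}

/-- `S`: the secant lines to `Q_λ`. -/
def setS (F : Type) [Field F] (lam : F) : Set (Submodule F (Fin 4 → F)) :=
  {l | isLine F l ∧ secantTo F l lam}

/-- The symmetric bilinear form obtained by polarizing `F_λ`. -/
def polarFq (F : Type) [Field F] (lam : F) (u v : Fin 4 → F) : F :=
  Fq F lam (u + v) - Fq F lam u - Fq F lam v

theorem polarFq_eq (F : Type) [Field F] (lam : F) (u v : Fin 4 → F) :
    polarFq F lam u v =
      u 0 * v 2 + u 2 * v 0 - 2 * (u 1 * v 1) + lam * (2 * (u 3 * v 3)) := by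
  simp only [polarFq, Fq, Pi.add_apply]
  ring

/-- `W^{⊥_λ}`: the orthogonal complement of a subspace `W` with respect to the
symmetric bilinear form obtained by polarizing `F_λ`. -/
def perpLam (F : Type) [Field F] (lam : F) (W : Submodule F (Fin 4 → F)) :
    Submodule F (Fin 4 → F) where
  carrier := {v | ∀ u ∈ W, polarFq F lam u v = 0}
  add_mem' := by
    intro x y hx hy u hu
    have h1 := hx u hu
    have h2 := hy u hu
    rw [polarFq_eq] at h1 h2 ⊢
    simp only [Pi.add_apply]
    linear_combination h1 + h2
  zero_mem' := by
    intro u hu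
    rw [polarFq_eq]
    simp
  smul_mem' := by
    intro c x hx u hu
    have h1 := hx u hu
    rw [polarFq_eq] at h1 ⊢
    simp only [Pi.smul_apply, smul_eq_mul]
    linear_combination c * h1

/-!
Write `P = ⟨p⟩` and pick `u, u' ∈ π` with `⟨p, u⟩` the tangent of `C` at `P` and `φ(p, u') ≠ 0`,
where `φ` is the polar form of `F₀`; then `p, u, u', U₄` is a basis of `V`. Since
`F_λ(a p + b w) = b (a φ_λ(p, w) + b F_λ(w))`, a line `⟨p, w⟩` is secant to `Q_λ` when
`φ_λ(p, w) ≠ 0`, tangent when `φ_λ(p, w) = 0 ≠ F_λ(w)`, and contained in `Q_λ` otherwise.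
The lines of `π` through `P` are `⟨p, u⟩`, tangent to `C`, and the `q` secants `⟨p, u' + β u⟩`.
The other lines through `P` are `⟨p, U₄ + α u + β u'⟩`; as `p ∈ π`, `φ_λ(p, ·)` does not depend on
`λ` and equals `β φ(p, u')` there, so such a line is secant to every `Q_λ` iff `β ≠ 0`, giving
`q(q - 1)` lines of `L₄'`; the line with `α = β = 0` is the generator `⟨p, U₄⟩` of `Q₀`.
A line through `P` that meets `π` in a single point meets it in `P ∈ C`, which excludes
`L₂'`, `L₃'` and `L₄`.
-/

open Submodule Module Set

section LinearAlgebra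

variable {K V : Type*} [Field K] [AddCommGroup V] [Module K V]

lemma eq_span_singleton_of_finrank_eq_one [FiniteDimensional K V] {P : Submodule K V}
    (hP : finrank K P = 1) {v : V} (hv : v ∈ P) (hv0 : v ≠ 0) : P = K ∙ v :=
  (eq_of_le_of_finrank_eq ((span_singleton_le_iff_mem _ _).2 hv)
    (by rw [hP, finrank_span_singleton hv0])).symm

lemma finrank_span_pair {x y : V} (h : LinearIndependent K ![x, y]) :
    finrank K (span K {x, y}) = 2 := by
  have := finrank_span_eq_card h
  rwa [Matrix.range_cons_cons_empty, Fintype.card_fin] at this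

lemma eq_span_pair_of_finrank_eq_two [FiniteDimensional K V] {l : Submodule K V}
    (hl : finrank K l = 2) {x y : V} (hx : x ∈ l) (hy : y ∈ l)
    (h : LinearIndependent K ![x, y]) : l = span K {x, y} :=
  (eq_of_le_of_finrank_eq (span_le.2 (by simp [insert_subset_iff, hx, hy]))
    (by rw [hl, finrank_span_pair h])).symm

end LinearAlgebra

section PencilOfQuadrics

variable {F : Type} [Field F]

lemma mem_planePi_iff {v : Fin 4 → F} : v ∈ planePi F ↔ v 3 = 0 := Iff.rfl

lemma Fq_eq_add (lam : F) (v : Fin 4 → F) : Fq F lam v = Fq F 0 v + lam * v 3 ^ 2 := by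
  simp [Fq]

lemma Fq_of_mem_planePi (lam : F) {v : Fin 4 → F} (hv : v ∈ planePi F) :
    Fq F lam v = Fq F 0 v := by
  rw [Fq_eq_add, mem_planePi_iff.1 hv]
  ring

lemma polarFq_of_mem_planePi (lam : F) {p : Fin 4 → F} (hp : p ∈ planePi F) (w : Fin 4 → F) :
    polarFq F lam p w = polarFq F 0 p w := by
  rw [polarFq_eq, polarFq_eq, mem_planePi_iff.1 hp]
  ring

lemma polarFq_add_smul (lam c : F) (p x y : Fin 4 → F) :
    polarFq F lam p (x + c • y) = polarFq F lam p x + c * polarFq F lam p y := by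
  simp only [polarFq_eq, Pi.add_apply, Pi.smul_apply, smul_eq_mul]
  ring

lemma Fq_smul (lam c : F) (v : Fin 4 → F) : Fq F lam (c • v) = c ^ 2 * Fq F lam v := by
  simp only [Fq, Pi.smul_apply, smul_eq_mul]
  ring

lemma Fq_smul_add_smul (lam a b : F) (p w : Fin 4 → F) :
    Fq F lam (a • p + b • w) =
      a ^ 2 * Fq F lam p + a * b * polarFq F lam p w + b ^ 2 * Fq F lam w := by
  simp only [polarFq_eq, Fq, Pi.add_apply, Pi.smul_apply, smul_eq_mul]
  ring

lemma mem_qpts_iff {lam : F} {l P : Submodule F (Fin 4 → F)} :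
    P ∈ qpts F lam l ↔ ∃ v ∈ l, v ≠ 0 ∧ Fq F lam v = 0 ∧ P = F ∙ v := by
  constructor
  · rintro ⟨⟨hP, hPF⟩, hPl⟩
    obtain ⟨v, hv, hv0⟩ := P.ne_bot_iff.1 (by rintro rfl; simp [isPoint] at hP)
    exact ⟨v, hPl hv, hv0, hPF v hv, eq_span_singleton_of_finrank_eq_one hP hv hv0⟩
  · rintro ⟨v, hv, hv0, hFv, rfl⟩
    refine ⟨⟨finrank_span_singleton hv0, fun w hw => ?_⟩, (span_singleton_le_iff_mem _ _).2 hv⟩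
    obtain ⟨c, rfl⟩ := mem_span_singleton.1 hw
    rw [Fq_smul, hFv, mul_zero]

section LineThroughQuadricPoint

variable {lam : F} {p w : Fin 4 → F}

lemma qpts_span_pair_of_polarFq_ne_zero (hpw : LinearIndependent F ![p, w])
    (hp : Fq F lam p = 0) (hφ : polarFq F lam p w ≠ 0) :
    qpts F lam (span F {p, w}) =
      {F ∙ p, F ∙ (polarFq F lam p w • w - Fq F lam w • p)} := by
  have hpair := LinearIndependent.pair_iff.1 hpw
  ext P
  rw [mem_qpts_iff, mem_insert_iff, mem_singleton_iff]
  constructor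
  · rintro ⟨v, hv, hv0, hFv, rfl⟩
    obtain ⟨a, b, rfl⟩ := mem_span_pair.1 hv
    rw [Fq_smul_add_smul, hp] at hFv
    by_cases hb : b = 0
    · subst hb
      have ha : a ≠ 0 := by rintro rfl; simp at hv0
      left
      rw [zero_smul, add_zero, span_singleton_smul_eq ha.isUnit]
    · right
      have ha : a * polarFq F lam p w = -(b * Fq F lam w) := by
        have : b * (a * polarFq F lam p w + b * Fq F lam w) = 0 := by linear_combination hFv
        linear_combination (mul_eq_zero.1 this).resolve_left hb
      have hv : a • p + b • w = (b / polarFq F lam p w) •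
          (polarFq F lam p w • w - Fq F lam w • p) := by
        have ha' : a = -(b / polarFq F lam p w * Fq F lam w) := by
          field_simp
          linear_combination ha
        rw [ha']
        match_scalars <;> field_simp
      rw [hv, span_singleton_smul_eq (div_ne_zero hb hφ).isUnit]
  · rintro (rfl | rfl)
    · exact ⟨p, subset_span (by simp), hpw.ne_zero 0, hp, rfl⟩
    · refine ⟨_, mem_span_pair.2 ⟨-Fq F lam w, polarFq F lam p w, by module⟩, fun h => ?_, ?_, rfl⟩
      · exact hφ (hpair (-Fq F lam w) _ (by rw [← h]; module)).2
      · rw [show polarFq F lam p w • w - Fq F lam w • p =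
          (-Fq F lam w) • p + polarFq F lam p w • w by module, Fq_smul_add_smul, hp]
        ring

lemma secantTo_span_pair (hpw : LinearIndependent F ![p, w]) (hp : Fq F lam p = 0)
    (hφ : polarFq F lam p w ≠ 0) : secantTo F (span F {p, w}) lam := by
  rw [secantTo, qpts_span_pair_of_polarFq_ne_zero hpw hp hφ]
  refine ncard_pair ?_
  rw [Ne, span_singleton_eq_span_singleton]
  rintro ⟨c, hc⟩
  refine hφ (neg_eq_zero.1 (LinearIndependent.pair_iff.1 hpw (c + Fq F lam w) _ ?_).2)
  rw [add_smul, ← Units.smul_def, hc]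
  module

lemma qpts_span_pair_of_polarFq_eq_zero (hpw : LinearIndependent F ![p, w])
    (hp : Fq F lam p = 0) (hφ : polarFq F lam p w = 0) (hw : Fq F lam w ≠ 0) :
    qpts F lam (span F {p, w}) = {F ∙ p} := by
  ext P
  rw [mem_qpts_iff, mem_singleton_iff]
  constructor
  · rintro ⟨v, hv, hv0, hFv, rfl⟩
    obtain ⟨a, b, rfl⟩ := mem_span_pair.1 hv
    rw [Fq_smul_add_smul, hp, hφ] at hFv
    have hb : b = 0 := by
      have : b ^ 2 * Fq F lam w = 0 := by linear_combination hFv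
      simpa using (mul_eq_zero.1 this).resolve_right hw
    subst hb
    have ha : a ≠ 0 := by rintro rfl; simp at hv0
    rw [zero_smul, add_zero, span_singleton_smul_eq ha.isUnit]
  · rintro rfl
    exact ⟨p, subset_span (by simp), hpw.ne_zero 0, hp, rfl⟩

/-- The whole line lies on the quadric, so it carries at least three of its points. -/
lemma not_secantTo_span_pair [Finite F] (hpw : LinearIndependent F ![p, w])
    (hp : Fq F lam p = 0) (hw : Fq F lam w = 0) (hφ : polarFq F lam p w = 0) :
    ¬ secantTo F (span F {p, w}) lam := by
  have hpair := LinearIndependent.pair_iff.1 hpw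
  have hquad : ∀ v ∈ span F {p, w}, v ≠ 0 → F ∙ v ∈ qpts F lam (span F {p, w}) := by
    intro v hv hv0
    obtain ⟨a, b, rfl⟩ := mem_span_pair.1 hv
    exact mem_qpts_iff.2 ⟨_, hv, hv0, by rw [Fq_smul_add_smul, hp, hw, hφ]; ring, rfl⟩
  have hp_mem : p ∈ span F {p, w} := subset_span (by simp)
  have hw_mem : w ∈ span F {p, w} := subset_span (by simp)
  have hsub : {F ∙ p, F ∙ w, F ∙ (p + w)} ⊆ qpts F lam (span F {p, w}) := by
    simp only [insert_subset_iff, singleton_subset_iff]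
    refine ⟨hquad p hp_mem (hpw.ne_zero 0), hquad w hw_mem (by simpa using hpw.ne_zero 1),
      hquad _ (add_mem hp_mem hw_mem) fun h => ?_⟩
    exact one_ne_zero (hpair 1 1 (by rw [one_smul, one_smul, h])).1
  have hthree : ({F ∙ p, F ∙ w, F ∙ (p + w)} : Set (Submodule F (Fin 4 → F))).ncard = 3 := by
    rw [ncard_eq_three]
    refine ⟨_, _, _, ?_, ?_, ?_, rfl⟩ <;> rw [Ne, span_singleton_eq_span_singleton] <;>
      rintro ⟨c, hc⟩ <;> rw [Units.smul_def] at hc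
    · exact one_ne_zero (neg_eq_zero.1 (hpair c (-1) (by linear_combination (norm := module) hc)).2)
    · exact one_ne_zero (neg_eq_zero.1
        (hpair (c - 1) (-1) (by linear_combination (norm := module) hc)).2)
    · exact one_ne_zero (hpair 1 (1 - c) (by linear_combination (norm := module) -hc)).1
  intro hsec
  have := ncard_le_ncard hsub
  rw [hthree, hsec] at this
  omega

end LineThroughQuadricPoint

lemma linearIndependent_of_mem_planePi {p w : Fin 4 → F} (hp : p ∈ planePi F) (hp0 : p ≠ 0)
    (hw : w ∉ planePi F) : LinearIndependent F ![p, w] := by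
  refine (LinearIndependent.pair_iff' hp0).2 fun a h => hw ?_
  rw [← h]
  exact smul_mem _ a hp

lemma span_pair_inf_planePi {p w : Fin 4 → F} (hp : p ∈ planePi F) (hw : w ∉ planePi F) :
    span F {p, w} ⊓ planePi F = F ∙ p := by
  refine le_antisymm (fun v hv => ?_)
    (le_inf (span_mono (by simp)) ((span_singleton_le_iff_mem _ _).2 hp))
  obtain ⟨⟨a, b, rfl⟩, hvπ⟩ := And.imp_left mem_span_pair.1 (mem_inf.1 hv)
  obtain rfl : b = 0 := by
    by_contra hb
    rw [mem_planePi_iff] at hw hvπ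
    simp [mem_planePi_iff.1 hp, hb, hw] at hvπ
  simpa using smul_mem _ a (mem_span_singleton_self p)

lemma setOf_conicC_le_eq_qpts {l : Submodule F (Fin 4 → F)} (hl : l ≤ planePi F) :
    {P | P ∈ conicC F ∧ P ≤ l} = qpts F 0 l :=
  ext fun _ => ⟨fun ⟨⟨hP, _⟩, hPl⟩ => ⟨hP, hPl⟩, fun ⟨hP, hPl⟩ => ⟨⟨hP, hPl.trans hl⟩, hPl⟩⟩

lemma span_singleton_mem_conicC {p : Fin 4 → F} (hp : p ∈ planePi F) (hp0 : p ≠ 0)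
    (hFp : Fq F 0 p = 0) : F ∙ p ∈ conicC F :=
  mem_qpts_iff.2 ⟨p, hp, hp0, hFp, rfl⟩

lemma inf_planePi_mem_conicC {P l : Submodule F (Fin 4 → F)} (hP : P ∈ conicC F) (hPl : P ≤ l)
    (hl : isPoint F (l ⊓ planePi F)) : l ⊓ planePi F ∈ conicC F := by
  rwa [← eq_of_le_of_finrank_eq (le_inf hPl hP.2) (hP.1.1.trans hl.symm)]

lemma setOf_lineL1'_le_eq {p : Fin 4 → F} (hp : p ∈ planePi F) (hp0 : p ≠ 0)
    (hFp : Fq F 0 p = 0) :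
    {l | l ∈ lineL1' F ∧ F ∙ p ≤ l} = {span F {p, Pi.single 3 1}} := by
  have hli := linearIndependent_of_mem_planePi hp hp0 (w := Pi.single 3 1) (by simp [planePi])
  ext l
  constructor
  · rintro ⟨⟨hl, hU₄, -⟩, hpl⟩
    exact eq_span_pair_of_finrank_eq_two hl ((span_singleton_le_iff_mem _ _).1 hpl)
      ((span_singleton_le_iff_mem _ _).1 hU₄) hli
  · rintro rfl
    refine ⟨⟨finrank_span_pair hli, span_mono (by simp), fun v hv => ?_⟩, span_mono (by simp)⟩
    obtain ⟨a, b, rfl⟩ := mem_span_pair.1 hv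
    rw [Fq_smul_add_smul, hFp, polarFq_eq]
    simp [Fq, mem_planePi_iff.1 hp]

lemma setOf_lineL2_le_eq_empty [Finite F] {P : Submodule F (Fin 4 → F)} (hP : P ∈ conicC F) :
    {l | l ∈ lineL2 F ∧ P ≤ l} = ∅ :=
  eq_empty_of_forall_notMem fun l ⟨⟨_, _, hnone⟩, hPl⟩ =>
    ((ncard_pos (s := {P | P ∈ conicC F ∧ P ≤ l})).2 ⟨P, hP, hPl⟩).ne' hnone

/-- `⟨p⟩` is a point of `C`, `⟨p, u⟩` is the tangent and `⟨p, u'⟩` a secant of `C` through it,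
and `p, u, u', U₄` is a basis of `V`. -/
structure ConicFrame (p u u' : Fin 4 → F) : Prop where
  linearIndependent : LinearIndependent F ![p, u, u', Pi.single 3 1]
  p_mem : p ∈ planePi F
  u_mem : u ∈ planePi F
  u'_mem : u' ∈ planePi F
  Fq_p : Fq F 0 p = 0
  polarFq_u : polarFq F 0 p u = 0
  Fq_u : Fq F 0 u ≠ 0
  polarFq_u' : polarFq F 0 p u' ≠ 0

lemma conicFrame_of_apply_zero_ne_zero {x : Fin 4 → F} (hx : x ∈ planePi F)
    (hFx : Fq F 0 x = 0) (h0 : x 0 ≠ 0) : ConicFrame x ![0, x 0, 2 * x 1, 0] ![0, 0, 1, 0] where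
  linearIndependent := by
    rw [Fintype.linearIndependent_iff]
    intro g hg
    have e0 := congrFun hg 0
    have e1 := congrFun hg 1
    have e2 := congrFun hg 2
    have e3 := congrFun hg 3
    simp [Fin.sum_univ_four, mem_planePi_iff.1 hx, h0] at e0 e1 e2 e3
    intro i
    fin_cases i <;> simp_all
  p_mem := hx
  u_mem := rfl
  u'_mem := rfl
  Fq_p := hFx
  polarFq_u := by simp [polarFq_eq]; ring
  Fq_u := by simp [Fq, h0]
  polarFq_u' := by simp [polarFq_eq, h0]

lemma conicFrame_of_apply_two_ne_zero {x : Fin 4 → F} (hx : x ∈ planePi F)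
    (hFx : Fq F 0 x = 0) (h2 : x 2 ≠ 0) : ConicFrame x ![2 * x 1, x 2, 0, 0] ![1, 0, 0, 0] where
  linearIndependent := by
    rw [Fintype.linearIndependent_iff]
    intro g hg
    have e0 := congrFun hg 0
    have e1 := congrFun hg 1
    have e2 := congrFun hg 2
    have e3 := congrFun hg 3
    simp [Fin.sum_univ_four, mem_planePi_iff.1 hx, h2] at e0 e1 e2 e3
    intro i
    fin_cases i <;> simp_all
  p_mem := hx
  u_mem := rfl
  u'_mem := rfl
  Fq_p := hFx
  polarFq_u := by simp [polarFq_eq]; ring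
  Fq_u := by simp [Fq, h2]
  polarFq_u' := by simp [polarFq_eq, h2]

lemma exists_conicFrame {P : Submodule F (Fin 4 → F)} (hP : P ∈ conicC F) :
    ∃ p u u', ConicFrame p u u' ∧ P = F ∙ p := by
  obtain ⟨⟨hP1, hPF⟩, hPπ⟩ := hP
  obtain ⟨x, hx, hx0⟩ := P.ne_bot_iff.1 (by rintro rfl; simp [isPoint] at hP1)
  have hPx := eq_span_singleton_of_finrank_eq_one hP1 hx hx0
  by_cases h0 : x 0 = 0
  · have h2 : x 2 ≠ 0 := by
      intro h2
      have h1 : x 1 = 0 := by simpa [Fq, h0] using hPF x hx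
      exact hx0 (by ext i; fin_cases i <;> simp [h0, h1, h2, mem_planePi_iff.1 (hPπ hx)])
    exact ⟨_, _, _, conicFrame_of_apply_two_ne_zero (hPπ hx) (hPF x hx) h2, hPx⟩
  · exact ⟨_, _, _, conicFrame_of_apply_zero_ne_zero (hPπ hx) (hPF x hx) h0, hPx⟩

namespace ConicFrame

variable {p u u' : Fin 4 → F} (hf : ConicFrame p u u')
include hf

lemma p_ne_zero : p ≠ 0 := hf.linearIndependent.ne_zero 0

lemma eq_zero_of_combination_eq_zero {a b c d : F}
    (h : a • p + b • u + c • u' + d • Pi.single 3 1 = 0) : a = 0 ∧ b = 0 ∧ c = 0 ∧ d = 0 := by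
  have := Fintype.linearIndependent_iff.1 hf.linearIndependent ![a, b, c, d]
    (by simpa [Fin.sum_univ_four] using h)
  exact ⟨this 0, this 1, this 2, this 3⟩

lemma exists_combination (v : Fin 4 → F) :
    ∃ a b c d : F, v = a • p + b • u + c • u' + d • Pi.single 3 1 := by
  have htop := hf.linearIndependent.span_eq_top_of_card_eq_finrank (by simp)
  obtain ⟨g, hg⟩ := (mem_span_range_iff_exists_fun F).1 (htop ▸ mem_top : v ∈ _)
  exact ⟨g 0, g 1, g 2, g 3, by rw [← hg]; simp [Fin.sum_univ_four]⟩

lemma combination_apply_three (a b c d : F) :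
    (a • p + b • u + c • u' + d • Pi.single 3 1 : Fin 4 → F) 3 = d := by
  simp [mem_planePi_iff.1 hf.p_mem, mem_planePi_iff.1 hf.u_mem, mem_planePi_iff.1 hf.u'_mem]

lemma linearIndependent_tangent : LinearIndependent F ![p, u] :=
  LinearIndependent.pair_iff.2 fun s t h => by
    obtain ⟨hs, ht, -⟩ := hf.eq_zero_of_combination_eq_zero (c := 0) (d := 0) (by rw [← h]; module)
    exact ⟨hs, ht⟩

lemma linearIndependent_secant (β : F) : LinearIndependent F ![p, u' + β • u] :=
  LinearIndependent.pair_iff.2 fun s t h => by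
    obtain ⟨hs, -, ht, -⟩ :=
      hf.eq_zero_of_combination_eq_zero (b := t * β) (d := 0) (by rw [← h]; module)
    exact ⟨hs, ht⟩

lemma Fq_p_eq_zero (lam : F) : Fq F lam p = 0 := by
  rw [Fq_of_mem_planePi lam hf.p_mem, hf.Fq_p]

lemma transversal_apply_three (α β : F) : (Pi.single 3 1 + α • u + β • u' : Fin 4 → F) 3 = 1 := by
  simp [mem_planePi_iff.1 hf.u_mem, mem_planePi_iff.1 hf.u'_mem]

lemma transversal_not_mem_planePi (α β : F) : Pi.single 3 1 + α • u + β • u' ∉ planePi F := by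
  simp [mem_planePi_iff, hf.transversal_apply_three]

lemma linearIndependent_transversal (α β : F) :
    LinearIndependent F ![p, Pi.single 3 1 + α • u + β • u'] :=
  linearIndependent_of_mem_planePi hf.p_mem hf.p_ne_zero (hf.transversal_not_mem_planePi α β)

lemma polarFq_secant (lam β : F) : polarFq F lam p (u' + β • u) = polarFq F 0 p u' := by
  rw [polarFq_of_mem_planePi lam hf.p_mem, polarFq_add_smul, hf.polarFq_u, mul_zero, add_zero]

lemma polarFq_transversal (lam α β : F) :
    polarFq F lam p (Pi.single 3 1 + α • u + β • u') = β * polarFq F 0 p u' := by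
  rw [polarFq_of_mem_planePi lam hf.p_mem, polarFq_add_smul, polarFq_add_smul, hf.polarFq_u,
    polarFq_eq]
  simp [mem_planePi_iff.1 hf.p_mem]

lemma tangent_le_planePi : span F {p, u} ≤ planePi F :=
  span_le.2 (by simp [insert_subset_iff, hf.p_mem, hf.u_mem])

lemma secant_le_planePi (β : F) : span F {p, u' + β • u} ≤ planePi F :=
  span_le.2 (by simp [insert_subset_iff, hf.p_mem, add_mem hf.u'_mem (smul_mem _ β hf.u_mem)])

lemma ncard_conicC_le_tangent : {P | P ∈ conicC F ∧ P ≤ span F {p, u}}.ncard = 1 := by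
  rw [setOf_conicC_le_eq_qpts hf.tangent_le_planePi, qpts_span_pair_of_polarFq_eq_zero
    hf.linearIndependent_tangent hf.Fq_p hf.polarFq_u hf.Fq_u, ncard_singleton]

lemma ncard_conicC_le_secant (β : F) :
    {P | P ∈ conicC F ∧ P ≤ span F {p, u' + β • u}}.ncard = 2 := by
  rw [setOf_conicC_le_eq_qpts (hf.secant_le_planePi β)]
  exact secantTo_span_pair (hf.linearIndependent_secant β) hf.Fq_p
    ((hf.polarFq_secant 0 β).trans_ne hf.polarFq_u')

lemma eq_tangent_or_secant_of_le_planePi {l : Submodule F (Fin 4 → F)} (hl : isLine F l)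
    (hlπ : l ≤ planePi F) (hpl : p ∈ l) :
    l = span F {p, u} ∨ ∃ β : F, l = span F {p, u' + β • u} := by
  have hlt : F ∙ p < l := lt_of_le_of_ne ((span_singleton_le_iff_mem _ _).2 hpl) fun h => by
    have := finrank_span_singleton (K := F) hf.p_ne_zero
    rw [h, hl] at this
    omega
  obtain ⟨v, hvl, hvp⟩ := SetLike.exists_of_lt hlt
  obtain ⟨a, b, c, d, rfl⟩ := hf.exists_combination v
  obtain rfl : d = 0 := by simpa [mem_planePi_iff, hf.combination_apply_three] using hlπ hvl
  have hmem : b • u + c • u' ∈ l := by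
    convert sub_mem hvl (smul_mem l a hpl) using 1
    module
  by_cases hc : c = 0
  · subst hc
    have hb : b ≠ 0 := by
      rintro rfl
      exact hvp (by simpa using smul_mem _ a (mem_span_singleton_self p))
    left
    refine eq_span_pair_of_finrank_eq_two hl hpl ?_ hf.linearIndependent_tangent
    simpa [smul_smul, hb] using smul_mem l b⁻¹ hmem
  · right
    refine ⟨b / c, eq_span_pair_of_finrank_eq_two hl hpl ?_ (hf.linearIndependent_secant _)⟩
    convert smul_mem l c⁻¹ hmem using 1
    match_scalars <;> field_simp

lemma exists_eq_transversal_of_not_le_planePi {l : Submodule F (Fin 4 → F)} (hl : isLine F l)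
    (hlπ : ¬ l ≤ planePi F) (hpl : p ∈ l) :
    ∃ α β : F, l = span F {p, Pi.single 3 1 + α • u + β • u'} := by
  obtain ⟨v, hvl, hvπ⟩ := SetLike.not_le_iff_exists.1 hlπ
  obtain ⟨a, b, c, d, rfl⟩ := hf.exists_combination v
  have hd : d ≠ 0 := by
    rintro rfl
    exact hvπ (by rw [mem_planePi_iff, hf.combination_apply_three])
  refine ⟨b / d, c / d,
    eq_span_pair_of_finrank_eq_two hl hpl ?_ (hf.linearIndependent_transversal _ _)⟩
  convert smul_mem l d⁻¹ (sub_mem hvl (smul_mem l a hpl)) using 1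
  match_scalars <;> simp [hd, div_eq_inv_mul]

lemma injective_secant : Function.Injective fun β : F => span F {p, u' + β • u} := by
  intro β γ h
  dsimp only at h
  obtain ⟨x, y, hxy⟩ := mem_span_pair.1
    (h ▸ subset_span (by simp) : u' + β • u ∈ span F {p, u' + γ • u})
  obtain ⟨-, hβ, hy, -⟩ := hf.eq_zero_of_combination_eq_zero (a := x) (b := y * γ - β)
    (c := y - 1) (d := 0) (by linear_combination (norm := module) hxy)
  rw [sub_eq_zero.1 hy, one_mul, sub_eq_zero] at hβ
  exact hβ.symm

lemma injective_transversal :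
    Function.Injective fun ab : F × Fˣ =>
      span F {p, Pi.single 3 1 + ab.1 • u + (ab.2 : F) • u'} := by
  rintro ⟨α, β⟩ ⟨α', β'⟩ h
  dsimp only at h
  obtain ⟨x, y, hxy⟩ := mem_span_pair.1
    (h ▸ subset_span (by simp) : Pi.single 3 1 + α • u + (β : F) • u' ∈
      span F {p, Pi.single 3 1 + α' • u + (β' : F) • u'})
  obtain ⟨-, hα, hβ, hy⟩ := hf.eq_zero_of_combination_eq_zero (a := x) (b := y * α' - α)
    (c := y * β' - β) (d := y - 1) (by linear_combination (norm := module) hxy)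
  rw [sub_eq_zero.1 hy, one_mul, sub_eq_zero] at hα hβ
  rw [hα, Units.val_inj.1 hβ]

lemma setOf_lineL1_le_eq : {l | l ∈ lineL1 F ∧ F ∙ p ≤ l} = {span F {p, u}} := by
  ext l
  constructor
  · rintro ⟨⟨hl, hlπ, hcount⟩, hpl⟩
    rcases hf.eq_tangent_or_secant_of_le_planePi hl hlπ ((span_singleton_le_iff_mem _ _).1 hpl)
      with rfl | ⟨β, rfl⟩
    · rfl
    · rw [hf.ncard_conicC_le_secant] at hcount
      omega
  · rintro rfl
    exact ⟨⟨finrank_span_pair hf.linearIndependent_tangent, hf.tangent_le_planePi,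
      hf.ncard_conicC_le_tangent⟩, span_mono (by simp)⟩

lemma setOf_lineL3_le_eq :
    {l | l ∈ lineL3 F ∧ F ∙ p ≤ l} = range fun β : F => span F {p, u' + β • u} := by
  ext l
  constructor
  · rintro ⟨⟨hl, hlπ, hcount⟩, hpl⟩
    rcases hf.eq_tangent_or_secant_of_le_planePi hl hlπ ((span_singleton_le_iff_mem _ _).1 hpl)
      with rfl | ⟨β, rfl⟩
    · rw [hf.ncard_conicC_le_tangent] at hcount
      omega
    · exact ⟨β, rfl⟩
  · rintro ⟨β, rfl⟩
    exact ⟨⟨finrank_span_pair (hf.linearIndependent_secant β), hf.secant_le_planePi β,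
      hf.ncard_conicC_le_secant β⟩, span_mono (by simp)⟩

lemma setOf_lineL4'_le_eq [Finite F] :
    {l | l ∈ lineL4' F ∧ F ∙ p ≤ l} =
      range fun ab : F × Fˣ => span F {p, Pi.single 3 1 + ab.1 • u + (ab.2 : F) • u'} := by
  ext l
  constructor
  · rintro ⟨⟨hl, hlC, hsec⟩, hpl⟩
    have hlπ : ¬ l ≤ planePi F := fun h => by
      have := hlC.1.1
      rw [isPoint, inf_eq_left.2 h, hl] at this
      omega
    obtain ⟨α, β, rfl⟩ :=
      hf.exists_eq_transversal_of_not_le_planePi hl hlπ ((span_singleton_le_iff_mem _ _).1 hpl)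
    have hβ : β ≠ 0 := by
      rintro rfl
      -- for `λ = -F₀(w)` the whole line `⟨p, w⟩` lies on `Q_λ`
      refine not_secantTo_span_pair (hf.linearIndependent_transversal α 0) (hf.Fq_p_eq_zero _) ?_
        (by rw [hf.polarFq_transversal, zero_mul])
        (hsec (-Fq F 0 (Pi.single 3 1 + α • u + (0 : F) • u')))
      rw [Fq_eq_add, hf.transversal_apply_three]
      ring
    exact ⟨(α, Units.mk0 β hβ), rfl⟩
  · rintro ⟨⟨α, β⟩, rfl⟩
    refine ⟨⟨finrank_span_pair (hf.linearIndependent_transversal _ _), ?_, fun lam => ?_⟩,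
      span_mono (by simp)⟩
    · rw [span_pair_inf_planePi hf.p_mem (hf.transversal_not_mem_planePi _ _)]
      exact span_singleton_mem_conicC hf.p_mem hf.p_ne_zero hf.Fq_p
    · refine secantTo_span_pair (hf.linearIndependent_transversal _ _) (hf.Fq_p_eq_zero lam) ?_
      rw [hf.polarFq_transversal]
      exact mul_ne_zero β.ne_zero hf.polarFq_u'

end ConicFrame

end PencilOfQuadrics

theorem statement_10_general {F : Type} [Field F] [Fintype F] (q : ℕ)
    (hq : Fintype.card F = q) :
    ∀ P ∈ conicC F,
      ({l | l ∈ lineL1 F ∧ P ≤ l}).ncard = 1 ∧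
      ({l | l ∈ lineL3 F ∧ P ≤ l}).ncard = q ∧
      ({l | l ∈ lineL1' F ∧ P ≤ l}).ncard = 1 ∧
      ({l | l ∈ lineL4' F ∧ P ≤ l}).ncard = q * (q - 1) ∧
      {l | l ∈ lineL2 F ∧ P ≤ l} = ∅ ∧
      {l | l ∈ lineL4 F ∧ P ≤ l} = ∅ ∧
      {l | l ∈ lineL2' F ∧ P ≤ l} = ∅ ∧
      {l | l ∈ lineL3' F ∧ P ≤ l} = ∅ := by
  classical
  intro P hP
  obtain ⟨p, u, u', hf, rfl⟩ := exists_conicFrame hP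
  subst hq
  refine ⟨?_, ?_, ?_, ?_, setOf_lineL2_le_eq_empty hP, ?_, ?_, ?_⟩
  · rw [hf.setOf_lineL1_le_eq, ncard_singleton]
  · rw [hf.setOf_lineL3_le_eq, ncard_range_of_injective hf.injective_secant,
      Nat.card_eq_fintype_card]
  · rw [setOf_lineL1'_le_eq hf.p_mem hf.p_ne_zero hf.Fq_p, ncard_singleton]
  · rw [hf.setOf_lineL4'_le_eq, ncard_range_of_injective hf.injective_transversal,
      Nat.card_eq_fintype_card, Fintype.card_prod, Fintype.card_units]
  · exact eq_empty_of_forall_notMem fun l ⟨⟨_, _, _, hE⟩, hPl⟩ =>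
      hE.2.2.1 (inf_planePi_mem_conicC hP hPl hE.1)
  · exact eq_empty_of_forall_notMem fun l ⟨⟨_, _, hI⟩, hPl⟩ =>
      hI.2.2.1 (inf_planePi_mem_conicC hP hPl hI.1)
  · exact eq_empty_of_forall_notMem fun l ⟨⟨_, _, hE⟩, hPl⟩ =>
      hE.2.2.1 (inf_planePi_mem_conicC hP hPl hE.1)

theorem statement_10 {F : Type} [Field F] [Fintype F] (q : ℕ)
    (hq : Fintype.card F = q) (hodd : Odd q) :
    ∀ P ∈ conicC F,
      ({l | l ∈ lineL1 F ∧ P ≤ l}).ncard = 1 ∧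
      ({l | l ∈ lineL3 F ∧ P ≤ l}).ncard = q ∧
      ({l | l ∈ lineL1' F ∧ P ≤ l}).ncard = 1 ∧
      ({l | l ∈ lineL4' F ∧ P ≤ l}).ncard = q * (q - 1) ∧
      {l | l ∈ lineL2 F ∧ P ≤ l} = ∅ ∧
      {l | l ∈ lineL4 F ∧ P ≤ l} = ∅ ∧
      {l | l ∈ lineL2' F ∧ P ≤ l} = ∅ ∧
      {l | l ∈ lineL3' F ∧ P ≤ l} = ∅ :=
  statement_10_general q hq
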